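/- arXiv:math/0303208 — 3 statements merged into one kernel-verified Lean document; each statement's English description precedes it below -/
import Mathlib

section
/- The antidiagonal term is the unique monomial of lowest ω-weight in any minor Δ_{I,J}(Z) of the generic n×n matrix Z, provided every variable in the antidiagonal term lies on or above the main antidiagonal of Z. More precisely: for any k×k submatrix with rows I = {i_1 < ... < i_k} and columns J = {j_1 < ... < j_k}, and any permutation σ of {1,...,k} other than the order-reversing one, the ω-weight of the antidiagonal term ∑_{s=1}^{k} ω_{i_s, j_{k+1-s}} is strictly less than the weight ∑_{s=1}^{k} ω_{i_s, j_{σ(s)}}, where ω_{ij} = 3^(n-i-j) if i+j ≤ n and ω_{ij} = 0 if i+j > n. -/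
/-!
Write `K s = J (rev s)`: the antidiagonal term becomes the diagonal of the matrix
`w s u = ω(I s, K u)`, with `I` increasing and `K` decreasing. For `s < t` and `s < u` this matrix
satisfies the strict exchange inequality `w s s + w t u < w s u + w t s`: the entry
`w s u = 3^m` is positive since `I s + K u < I s + K s ≤ n + 1`, while `w s s` and `w t u` have
larger index sums and so are at most `3^(m-1)` each. Hence for `π ≠ 1`, moving the smallest
point `s` displaced by `π` back into place by a transposition strictly lowers the weight and
shrinks the support, and induction on the support makes the diagonal the strict minimum.
-/

open Finset Equiv

/-- The weight matrix: ω_{ij} = 3^(n-i-j) if i+j ≤ n, and 0 otherwise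
(indices i, j range over 1,…,n). -/
def gcWeight (n i j : ℕ) : ℤ := if i + j ≤ n then 3 ^ (n - i - j) else 0

lemma gcWeight_nonneg (n i j : ℕ) : 0 ≤ gcWeight n i j := by
  unfold gcWeight; split <;> positivity

lemma gcWeight_pos {n i j : ℕ} (h : i + j ≤ n) : 0 < gcWeight n i j := by
  rw [gcWeight, if_pos h]; positivity

lemma three_mul_gcWeight_le {n i j i' j' : ℕ} (h : i + j < i' + j') :
    3 * gcWeight n i' j' ≤ gcWeight n i j := by
  unfold gcWeight
  split_ifs
  · rw [← pow_succ']; exact pow_le_pow_right₀ (by norm_num) (by omega)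
  · omega
  · simp
  · simp

lemma gcWeight_add_lt_add {n i i' j j' : ℕ} (hi : i < i') (hj : j < j') (h : i + j' ≤ n + 1) :
    gcWeight n i j' + gcWeight n i' j < gcWeight n i j + gcWeight n i' j' := by
  have h₁ := three_mul_gcWeight_le (n := n) (show i + j < i + j' by omega)
  have h₂ := three_mul_gcWeight_le (n := n) (show i + j < i' + j by omega)
  have h₃ := gcWeight_pos (show i + j ≤ n by omega)
  have h₄ := gcWeight_nonneg n i' j'
  linarith

section Exchange

variable {ι M : Type*} [Fintype ι] [DecidableEq ι]
  [AddCommMonoid M] [PartialOrder M] [IsOrderedCancelAddMonoid M]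

lemma sum_lt_sum_of_add_lt_add_of_eqOn {f g : ι → M} {a b : ι} (hab : a ≠ b)
    (h : f a + f b < g a + g b) (hfg : ∀ x, x ≠ a → x ≠ b → f x = g x) :
    ∑ x, f x < ∑ x, g x := by
  have hsub : ({a, b} : Finset ι) ⊆ univ := subset_univ _
  have hrest : ∑ x ∈ univ \ {a, b}, f x = ∑ x ∈ univ \ {a, b}, g x :=
    sum_congr rfl fun x hx => by
      simp only [mem_sdiff, mem_insert, mem_singleton, not_or] at hx
      exact hfg x hx.2.1 hx.2.2
  rw [← sum_sdiff hsub, ← sum_sdiff hsub (f := g), sum_pair hab, sum_pair hab, hrest]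
  exact add_lt_add_right h _

variable [LinearOrder ι] {w : ι → ι → M}

lemma exists_card_support_lt_sum_lt (hw : ∀ s t u, s < t → s < u → w s s + w t u < w s u + w t s)
    {π : Perm ι} (hπ : π ≠ 1) :
    ∃ τ : Perm ι, #τ.support < #π.support ∧ ∑ x, w x (τ x) < ∑ x, w x (π x) := by
  have hne : π.support.Nonempty := by
    rwa [nonempty_iff_ne_empty, Ne, Perm.support_eq_empty_iff]
  set s := π.support.min' hne
  have hfix : ∀ x < s, π x = x := fun x hx => by
    by_contra h
    exact (min'_le _ x (Perm.mem_support.2 h)).not_gt hx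
  have hs : π s ≠ s := Perm.mem_support.1 (min'_mem _ _)
  have hsπs : s < π s := by
    refine lt_of_le_of_ne (not_lt.1 fun h => hs ?_) hs.symm
    exact π.injective (hfix _ h)
  set t := π.symm s
  have hπt : π t = s := π.apply_symm_apply s
  have hst : s < t := by
    refine lt_of_le_of_ne (not_lt.1 fun h => h.ne ?_) fun h => hs (h ▸ hπt)
    exact (hfix t h).symm.trans hπt
  refine ⟨swap s (π s) * π, Perm.card_support_swap_mul hs, ?_⟩
  refine sum_lt_sum_of_add_lt_add_of_eqOn hst.ne ?_ fun x hxs hxt => ?_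
  · simpa [hπt, swap_apply_left] using hw s t (π s) hst hsπs
  · rw [Perm.mul_apply, swap_apply_of_ne_of_ne]
    · exact fun h => hxt (π.injective (h.trans hπt.symm))
    · exact fun h => hxs (π.injective h)

theorem sum_diag_lt_sum_perm (hw : ∀ s t u, s < t → s < u → w s s + w t u < w s u + w t s)
    {π : Perm ι} (hπ : π ≠ 1) : ∑ x, w x x < ∑ x, w x (π x) := by
  induction h : #π.support using Nat.strong_induction_on generalizing π with
  | _ m ih =>
    obtain ⟨τ, hτcard, hτlt⟩ := exists_card_support_lt_sum_lt hw hπ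
    rcases eq_or_ne τ 1 with rfl | hτ
    · simpa using hτlt
    · exact (ih _ (h ▸ hτcard) hτ rfl).trans hτlt

end Exchange

theorem stmt_1_general (n k : ℕ) (I J : Fin k → ℕ)
    (hI : StrictMono I) (hJ : StrictMono J)
    (hanti : ∀ s : Fin k, I s + J s.rev ≤ n + 1)
    (σ : Equiv.Perm (Fin k)) (hσ : σ ≠ Fin.revPerm) :
    ∑ s : Fin k, gcWeight n (I s) (J s.rev)
      < ∑ s : Fin k, gcWeight n (I s) (J (σ s)) := by
  have hw : ∀ s t u : Fin k, s < t → s < u →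
      gcWeight n (I s) (J s.rev) + gcWeight n (I t) (J u.rev)
        < gcWeight n (I s) (J u.rev) + gcWeight n (I t) (J s.rev) := fun s t u hst hsu =>
    gcWeight_add_lt_add (hI hst) (hJ (Fin.rev_lt_rev.2 hsu)) (hanti s)
  have hπ : σ.trans Fin.revPerm ≠ 1 := fun h => hσ <|
    Equiv.ext fun s => by simpa using congrArg Fin.rev (Equiv.congr_fun h s)
  simpa using sum_diag_lt_sum_perm (w := fun s u => gcWeight n (I s) (J u.rev)) hw hπ

/-- The antidiagonal term is the unique monomial of lowest ω-weight in a minor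
Δ_{I,J}(Z), provided all its variables lie on or above the main antidiagonal:
for strictly increasing row indices I and column indices J in {1,…,n} with
i_s + j_{k+1-s} ≤ n+1 for all s, every permutation σ other than the
order-reversing one gives a strictly larger weight. -/
theorem stmt_1 (n k : ℕ) (hk : 1 ≤ k) (I J : Fin k → ℕ)
    (hI : StrictMono I) (hJ : StrictMono J)
    (hI1 : ∀ s, 1 ≤ I s) (hIn : ∀ s, I s ≤ n)
    (hJ1 : ∀ s, 1 ≤ J s) (hJn : ∀ s, J s ≤ n)
    (hanti : ∀ s : Fin k, I s + J s.rev ≤ n + 1)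
    (σ : Equiv.Perm (Fin k)) (hσ : σ ≠ Fin.revPerm) :
    ∑ s : Fin k, gcWeight n (I s) (J s.rev)
      < ∑ s : Fin k, gcWeight n (I s) (J (σ s)) :=
  stmt_1_general n k I J hI hJ hanti σ hσ
end

section
/- With the partial order on subsets of {1,...,n} defined by I ≥ J iff |I| ≤ |J| and i_s ≥ j_s for all s ≤ |I|, for subsets I = {i_1 < ... < i_k} and J = {j_1 < ... < j_ℓ} with k ≤ ℓ, the set I ∧ J := {min(i_1,j_1), ..., min(i_k,j_k), j_{k+1}, ..., j_ℓ} is a well-defined subset of size ℓ (the listed elements are strictly increasing), and it is the greatest lower bound (meet) of I and J in this poset. -/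
/-!
Both `I` and `J` are enumerated increasingly, so the sequence
`min(i_1,j_1) < ⋯ < min(i_k,j_k) < j_{k+1} < ⋯ < j_ℓ` is strictly increasing; hence it is the
increasing enumeration of `I ∧ J`, whose `s`-th element is then read off directly. Being below
`I` and `J` is then `min ≤ i_s, j_s`, and any common lower bound `L` has `l_s ≤ i_s, j_s`,
hence `l_s ≤ min(i_s, j_s)`.
-/

/-- The s-th smallest element (0-indexed) of a finite set of naturals. -/
def sortNth (I : Finset ℕ) (s : ℕ) : ℕ := (I.sort (· ≤ ·))[s]!

/-- The Gonciulea–Lakshmibai order: I ≥ J iff |I| ≤ |J| and the s-th smallest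
element of I is ≥ the s-th smallest element of J for all s < |I|. -/
def glGe (I J : Finset ℕ) : Prop :=
  I.card ≤ J.card ∧ ∀ s < I.card, sortNth J s ≤ sortNth I s

/-- The meet I ∧ J = {min(i_1,j_1),…,min(i_k,j_k), j_{k+1},…,j_ℓ}
for |I| = k ≤ ℓ = |J|. -/
def glMeetAux (I J : Finset ℕ) : Finset ℕ :=
  (Finset.range J.card).image
    (fun s => if s < I.card then min (sortNth I s) (sortNth J s) else sortNth J s)

open Finset

theorem Finset.sort_image_range {α : Type*} [LinearOrder α] {f : ℕ → α} {ℓ : ℕ}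
    (hf : StrictMonoOn f (Set.Iio ℓ)) :
    ((range ℓ).image f).sort = (List.range ℓ).map f := by
  have hlt : ((List.range ℓ).map f).Pairwise (· < ·) := by
    rw [List.pairwise_map]
    exact List.pairwise_lt_range.imp_of_mem fun ha hb hab =>
      hf (by simpa using ha) (by simpa using hb) hab
  have himage : (range ℓ).image f = ((List.range ℓ).map f).toFinset := by
    ext; simp
  rw [himage]
  exact (List.toFinset_sort _ hlt.nodup).mpr (hlt.imp le_of_lt)

lemma sortNth_strictMonoOn (I : Finset ℕ) : StrictMonoOn (sortNth I) (Set.Iio I.card) := by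
  intro s hs t ht hst
  have hlen : (I.sort (· ≤ ·)).length = I.card := length_sort _
  have hs' : s < (I.sort (· ≤ ·)).length := hlen ▸ hs
  have ht' : t < (I.sort (· ≤ ·)).length := hlen ▸ ht
  have := List.pairwise_iff_getElem.mp (sortedLT_sort I).pairwise s t hs' ht' hst
  simpa [sortNth, getElem!_pos (I.sort (· ≤ ·)) s hs', getElem!_pos (I.sort (· ≤ ·)) t ht'] using this

lemma sortNth_image_range {f : ℕ → ℕ} {ℓ s : ℕ} (hf : StrictMonoOn f (Set.Iio ℓ))
    (hs : s < ℓ) : sortNth ((range ℓ).image f) s = f s := by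
  have hs' : s < ((List.range ℓ).map f).length := by simpa using hs
  rw [sortNth, sort_image_range hf, getElem!_pos ((List.range ℓ).map f) s hs']
  simp

theorem Finset.card_image_range {α : Type*} [LinearOrder α] {f : ℕ → α} {ℓ : ℕ}
    (hf : StrictMonoOn f (Set.Iio ℓ)) : ((range ℓ).image f).card = ℓ := by
  rw [card_image_of_injOn (hf.injOn.mono fun _ hs => by simpa using hs), card_range]

def glMeetSeq (I J : Finset ℕ) (s : ℕ) : ℕ :=
  if s < I.card then min (sortNth I s) (sortNth J s) else sortNth J s

lemma glMeetAux_eq_image (I J : Finset ℕ) :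
    glMeetAux I J = (range J.card).image (glMeetSeq I J) := rfl

lemma glMeetSeq_strictMonoOn (I J : Finset ℕ) :
    StrictMonoOn (glMeetSeq I J) (Set.Iio J.card) := by
  intro s hs t ht hst
  have hJ : sortNth J s < sortNth J t := sortNth_strictMonoOn J hs ht hst
  unfold glMeetSeq
  by_cases htI : t < I.card
  · have hI : sortNth I s < sortNth I t :=
      sortNth_strictMonoOn I (hst.trans htI) htI hst
    rw [if_pos (hst.trans htI), if_pos htI]
    exact lt_min (min_le_left _ _ |>.trans_lt hI) (min_le_right _ _ |>.trans_lt hJ)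
  · rw [if_neg htI]
    split_ifs
    · exact (min_le_right _ _).trans_lt hJ
    · exact hJ

lemma card_glMeetAux (I J : Finset ℕ) : (glMeetAux I J).card = J.card := by
  rw [glMeetAux_eq_image, card_image_range (glMeetSeq_strictMonoOn I J)]

lemma sortNth_glMeetAux (I J : Finset ℕ) {s : ℕ} (hs : s < J.card) :
    sortNth (glMeetAux I J) s = glMeetSeq I J s := by
  rw [glMeetAux_eq_image, sortNth_image_range (glMeetSeq_strictMonoOn I J) hs]

lemma glGe_glMeetAux_left {I J : Finset ℕ} (hcard : I.card ≤ J.card) :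
    glGe I (glMeetAux I J) := by
  refine ⟨(card_glMeetAux I J).symm ▸ hcard, fun s hs => ?_⟩
  rw [sortNth_glMeetAux I J (hs.trans_le hcard), glMeetSeq, if_pos hs]
  exact min_le_left _ _

lemma glGe_glMeetAux_right (I J : Finset ℕ) : glGe J (glMeetAux I J) := by
  refine ⟨(card_glMeetAux I J).ge, fun s hs => ?_⟩
  rw [sortNth_glMeetAux I J hs, glMeetSeq]
  split_ifs
  · exact min_le_right _ _
  · exact le_rfl

lemma glGe_glMeetAux_of_glGe {I J L : Finset ℕ} (hIL : glGe I L) (hJL : glGe J L) :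
    glGe (glMeetAux I J) L := by
  rw [glGe, card_glMeetAux]
  refine ⟨hJL.1, fun s hs => ?_⟩
  rw [sortNth_glMeetAux I J hs, glMeetSeq]
  split_ifs with hsI
  · exact le_min (hIL.2 s hsI) (hJL.2 s hs)
  · exact hJL.2 s hs

theorem stmt_5_general (n : ℕ) (I J : Finset ℕ) (hcard : I.card ≤ J.card) :
    (∀ s t, s < t → t < J.card →
      (if s < I.card then min (sortNth I s) (sortNth J s) else sortNth J s) <
      (if t < I.card then min (sortNth I t) (sortNth J t) else sortNth J t)) ∧
    (glMeetAux I J).card = J.card ∧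
    glGe I (glMeetAux I J) ∧ glGe J (glMeetAux I J) ∧
    (∀ L : Finset ℕ, L ⊆ Finset.Icc 1 n → glGe I L → glGe J L →
      glGe (glMeetAux I J) L) :=
  ⟨fun _ _ hst ht => glMeetSeq_strictMonoOn I J (hst.trans ht) ht hst, card_glMeetAux I J,
    glGe_glMeetAux_left hcard, glGe_glMeetAux_right I J,
    fun _ _ hIL hJL => glGe_glMeetAux_of_glGe hIL hJL⟩

/-- For subsets I, J of {1,…,n} with |I| = k ≤ ℓ = |J|, the set
I ∧ J = {min(i_1,j_1),…,min(i_k,j_k), j_{k+1},…,j_ℓ} is a well-defined subset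
of size ℓ (its listed elements are strictly increasing), and it is the
greatest lower bound of I and J in the Gonciulea–Lakshmibai order. -/
theorem stmt_5 (n : ℕ) (I J : Finset ℕ) (hIn : I ⊆ Finset.Icc 1 n)
    (hJn : J ⊆ Finset.Icc 1 n) (hcard : I.card ≤ J.card) :
    (∀ s t, s < t → t < J.card →
      (if s < I.card then min (sortNth I s) (sortNth J s) else sortNth J s) <
      (if t < I.card then min (sortNth I t) (sortNth J t) else sortNth J t)) ∧
    (glMeetAux I J).card = J.card ∧
    glGe I (glMeetAux I J) ∧ glGe J (glMeetAux I J) ∧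
    (∀ L : Finset ℕ, L ⊆ Finset.Icc 1 n → glGe I L → glGe J L →
      glGe (glMeetAux I J) L) :=
  stmt_5_general n I J hcard
end

section
/- For a lower triangular invertible n×n matrix b over ℂ, and for τ ∈ ℂ*, let τ̃_j = diag(τ^{ω_{1j}}, ..., τ^{ω_{nj}}) with ω_{ij} = 3^{n−i−j} for i+j ≤ n and 0 otherwise. Then each entry of τ̃_j^{−1} b τ̃_j is of the form τ^{e} · b_{ik} with exponent e = ω_{kj} − ω_{ij} ≥ 0 for all i ≥ k (entries on or below the diagonal), i.e., the conjugate τ̃_j^{−1} b τ̃_j has entries that are polynomial in τ; and the limit as τ → 0 is the matrix obtained from b by setting to 0 all entries b_{ik} with i > k and k ≤ n−j (strictly below the diagonal in columns 1,...,n−j). -/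
lemma gcWeight_nonneg_sub (n i k j : ℕ) (hki : k ≤ i) :
    0 ≤ gcWeight n k j - gcWeight n i j := by
  unfold gcWeight
  split_ifs with h1 h2 h2
  · have h : n - i - j ≤ n - k - j := by omega
    have := pow_le_pow_right₀ (by norm_num : (1:ℤ) ≤ 3) h
    linarith
  · have : (0:ℤ) ≤ 3 ^ (n - k - j) := by positivity
    linarith
  · omega
  · simp

lemma gcWeight_pos_sub (n i k j : ℕ) (hki : k ≤ i) :
    0 < gcWeight n k j - gcWeight n i j ↔ k < i ∧ k + j ≤ n := by
  unfold gcWeight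
  split_ifs with h1 h2 h2
  · constructor
    · intro h
      refine ⟨?_, h1⟩
      by_contra hc
      have : i = k := by omega
      subst this; simp at h
    · intro ⟨hki', hkj⟩
      have h : n - i - j < n - k - j := by omega
      have := pow_lt_pow_right₀ (by norm_num : (1:ℤ) < 3) h
      linarith
  · constructor
    · intro _
      constructor
      · omega
      · exact h1
    · intro _
      have : (0:ℤ) < 3 ^ (n - k - j) := by positivity
      linarith
  · omega
  · constructor
    · simp
    · intro ⟨_, hkj⟩; exact absurd hkj h1

/-- For a lower triangular invertible matrix b and the conjugation
(τ̃_j⁻¹ b τ̃_j)_{ik} = τ^(ω_{kj} − ω_{ij}) · b_{ik}: (1) on or below the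
diagonal (i ≥ k) the exponent ω_{kj} − ω_{ij} is nonnegative, so entries are
polynomial in τ; (2) the exponent is strictly positive exactly when i > k and
k + j ≤ n; hence (3) the limit as τ → 0 exists and equals b with the entries
strictly below the diagonal in columns 1,…,n−j set to 0. -/
theorem stmt_19 (n : ℕ) (hn : 1 ≤ n) (b : ℕ → ℕ → ℂ)
    (hlower : ∀ i k, i < k → b i k = 0) (hinv : ∀ i, b i i ≠ 0) :
    (∀ i k j, 1 ≤ k → k ≤ i → i ≤ n → 1 ≤ j → j ≤ n →
      0 ≤ gcWeight n k j - gcWeight n i j) ∧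
    (∀ i k j, 1 ≤ k → k ≤ i → i ≤ n → 1 ≤ j → j ≤ n →
      (0 < gcWeight n k j - gcWeight n i j ↔ k < i ∧ k + j ≤ n)) ∧
    (∀ i k j, 1 ≤ k → k ≤ i → i ≤ n → 1 ≤ j → j ≤ n →
      Filter.Tendsto
        (fun τ : ℂ => τ ^ (gcWeight n k j - gcWeight n i j).toNat * b i k)
        (nhds 0)
        (nhds (if k < i ∧ k + j ≤ n then 0 else b i k))) := by
  refine ⟨fun i k j _ hki _ _ _ => gcWeight_nonneg_sub n i k j hki,
    fun i k j _ hki _ _ _ => gcWeight_pos_sub n i k j hki,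
    fun i k j _ hki _ _ _ => ?_⟩
  set e := (gcWeight n k j - gcWeight n i j).toNat with he
  by_cases h : k < i ∧ k + j ≤ n
  · have hpos : 0 < gcWeight n k j - gcWeight n i j :=
      (gcWeight_pos_sub n i k j hki).mpr h
    have hne : e ≠ 0 := by
      simp only [he]
      omega
    rw [if_pos h]
    have : Filter.Tendsto (fun τ : ℂ => τ ^ e * b i k) (nhds 0)
        (nhds ((0:ℂ) ^ e * b i k)) :=
      ((continuous_pow e).tendsto 0).mul_const _
    simpa [zero_pow hne] using this
  · have hzero : gcWeight n k j - gcWeight n i j = 0 := by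
      have := gcWeight_nonneg_sub n i k j hki
      have h2 := (gcWeight_pos_sub n i k j hki).not.mpr h
      omega
    have he0 : e = 0 := by simp [he, hzero]
    rw [if_neg h]
    simpa [he0] using (tendsto_const_nhds : Filter.Tendsto (fun _ : ℂ => b i k) (nhds 0) _)
end
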